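/- arXiv:1610.02920 — 2 statements merged into one kernel-verified Lean document; each statement's English description precedes it below -/
import Mathlib

section
/- If f is strictly convex and differentiable on (0,∞), then BR_f(r_θ) = E_q[f'(r_θ)r_θ − f(r_θ)] − E_p[f'(r_θ)] is uniquely minimized over measurable r_θ > 0 (up to q-a.e. equality) at r_θ = p/q. -/
open MeasureTheory

/-- Strict Bregman positivity: for a strictly convex differentiable `f` on `(0,∞)`,
the Bregman divergence `f u - f r - f' r * (u - r)` is positive when `u ≠ r`. -/
lemma bregman_pos_aux {f f' : ℝ → ℝ} (hconv : StrictConvexOn ℝ (Set.Ioi 0) f)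
    {r u : ℝ} (hd : HasDerivAt f (f' r) r) (hr : r ∈ Set.Ioi (0:ℝ))
    (hu : u ∈ Set.Ioi (0:ℝ)) (hne : u ≠ r) :
    0 < f u - f r - f' r * (u - r) := by
  rcases lt_or_gt_of_ne hne with h | h
  · -- u < r : slope f u r < f' r
    have hs := hconv.slope_lt_of_hasDerivAt hu hr h hd
    rw [slope_def_field] at hs
    have hpos : (0:ℝ) < r - u := by linarith
    rw [div_lt_iff₀ hpos] at hs
    nlinarith
  · -- r < u : f' r < slope f r u
    have hs := hconv.lt_slope_of_hasDerivAt hr hu h hd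
    rw [slope_def_field] at hs
    have hpos : (0:ℝ) < u - r := by linarith
    rw [lt_div_iff₀ hpos] at hs
    nlinarith

/-- If `f` is strictly convex and differentiable on `(0,∞)`, the risk
`BR_f(r_θ) = E_q[f'(r_θ)r_θ − f(r_θ)] − E_p[f'(r_θ)]` is uniquely minimized
(up to q-a.e. equality) at `r_θ = p/q`. -/
theorem bregman_risk_unique_minimizer {X : Type*} [MeasurableSpace X]
    (μ : Measure X) [SigmaFinite μ]
    (p q rθ : X → ℝ) (f f' : ℝ → ℝ)
    (hconv : StrictConvexOn ℝ (Set.Ioi 0) f)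
    (hderiv : ∀ x ∈ Set.Ioi (0:ℝ), HasDerivAt f (f' x) x)
    (hp : Measurable p) (hq : Measurable q) (hrθ : Measurable rθ)
    (hp0 : ∀ᵐ x ∂μ, 0 < p x) (hq0 : ∀ᵐ x ∂μ, 0 < q x)
    (hrθ0 : ∀ᵐ x ∂μ, 0 < rθ x)
    (hpint : ∫ x, p x ∂μ = 1) (hqint : ∫ x, q x ∂μ = 1)
    (h1 : Integrable (fun x => (f' (rθ x) * rθ x - f (rθ x)) * q x) μ)
    (h2 : Integrable (fun x => f' (rθ x) * p x) μ)
    (h3 : Integrable (fun x =>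
      (f' (p x / q x) * (p x / q x) - f (p x / q x)) * q x) μ)
    (h4 : Integrable (fun x => f' (p x / q x) * p x) μ) :
    ((∫ x, (f' (p x / q x) * (p x / q x) - f (p x / q x)) * q x ∂μ)
        - (∫ x, f' (p x / q x) * p x ∂μ)
      ≤ (∫ x, (f' (rθ x) * rθ x - f (rθ x)) * q x ∂μ)
        - ∫ x, f' (rθ x) * p x ∂μ)
    ∧ (((∫ x, (f' (rθ x) * rθ x - f (rθ x)) * q x ∂μ)
          - (∫ x, f' (rθ x) * p x ∂μ)
        = (∫ x, (f' (p x / q x) * (p x / q x) - f (p x / q x)) * q x ∂μ)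
          - ∫ x, f' (p x / q x) * p x ∂μ) ↔
        ∀ᵐ x ∂μ, rθ x = p x / q x) := by
  set D : X → ℝ := fun x =>
    ((f' (rθ x) * rθ x - f (rθ x)) * q x - f' (rθ x) * p x)
      - ((f' (p x / q x) * (p x / q x) - f (p x / q x)) * q x - f' (p x / q x) * p x)
    with hD
  have hDint : Integrable D μ := (h1.sub h2).sub (h3.sub h4)
  have hID : ∫ x, D x ∂μ =
      ((∫ x, (f' (rθ x) * rθ x - f (rθ x)) * q x ∂μ) - ∫ x, f' (rθ x) * p x ∂μ)
      - ((∫ x, (f' (p x / q x) * (p x / q x) - f (p x / q x)) * q x ∂μ)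
          - ∫ x, f' (p x / q x) * p x ∂μ) := by
    rw [integral_sub (f := fun x => (f' (rθ x) * rθ x - f (rθ x)) * q x - f' (rθ x) * p x)
      (g := fun x => (f' (p x / q x) * (p x / q x) - f (p x / q x)) * q x - f' (p x / q x) * p x)
      (h1.sub h2) (h3.sub h4), integral_sub h1 h2, integral_sub h3 h4]
  -- a.e. key facts
  have hkey : ∀ᵐ x ∂μ, 0 ≤ D x ∧ (D x = 0 → rθ x = p x / q x) := by
    filter_upwards [hp0, hq0, hrθ0] with x hpx hqx hrx
    set u := p x / q x with hu
    have hux : 0 < u := div_pos hpx hqx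
    have huq : u * q x = p x := div_mul_cancel₀ _ (ne_of_gt hqx)
    have hDval : D x = q x * (f u - f (rθ x) - f' (rθ x) * (u - rθ x)) := by
      simp only [hD]
      rw [← hu, ← huq]
      ring
    by_cases hne : rθ x = u
    · constructor
      · rw [hDval, hne]; simp
      · intro _; exact hne
    · have hpos := bregman_pos_aux hconv (hderiv (rθ x) hrx) hrx hux
        (fun h => hne h.symm)
      constructor
      · rw [hDval]; positivity
      · intro hzero
        rw [hDval] at hzero
        exfalso
        have := mul_pos hqx hpos
        linarith
  have hnonneg : 0 ≤ᵐ[μ] D := hkey.mono fun x hx => hx.1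
  have hInonneg : 0 ≤ ∫ x, D x ∂μ := integral_nonneg_of_ae hnonneg
  constructor
  · linarith [hID ▸ hInonneg]
  · constructor
    · intro heq
      have hI0 : ∫ x, D x ∂μ = 0 := by rw [hID, heq]; ring
      have hae : D =ᵐ[μ] 0 :=
        ((integral_eq_zero_iff_of_nonneg_ae hnonneg hDint).mp hI0)
      filter_upwards [hae, hkey] with x hx hkx
      exact hkx.2 hx
    · intro hae
      have hD0 : ∀ᵐ x ∂μ, D x = 0 := by
        filter_upwards [hae] with x hx
        simp only [hD, hx]
        ring
      have : ∫ x, D x ∂μ = 0 := by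
        rw [integral_congr_ae hD0, integral_zero]
      rw [hID] at this
      linarith
end

section
/- For the GAN generator f(x) = x·log x − (x+1)·log(x+1), the maximizer T of E_p[log σ'] form yields: for fixed densities p, q, the function T(x) = p(x)/(p(x)+q(x)) uniquely maximizes E_p[log T(x)] + E_q[log(1 − T(x))] over measurable T : X → (0,1). -/
/-!
Pointwise, `a log t + b log (1 - t) ≤ a log s + b log (1 - s)` with `s = a / (a + b)`, strictly
unless `t = s`: this is `log x ≤ x - 1` applied to `x = t / s` and `x = (1 - t) / (1 - s)`.
Integrating gives the inequality, and equality of the integrals of two a.e. ordered integrable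
functions forces them to agree a.e.
-/

open MeasureTheory

/-- At `t = a / c` both sides agree, so this says that `t ↦ a log t - c t` is maximized
only there (for `a = 0` the supremum `0` is not attained). -/
lemma mul_log_sub_mul_lt_of_ne {a c t : ℝ} (ha : 0 ≤ a) (hc : 0 < c) (ht : 0 < t)
    (hne : t ≠ a / c) :
    a * Real.log t - c * t < a * Real.log (a / c) - a := by
  rcases ha.eq_or_lt with rfl | ha
  · simpa using mul_pos hc ht
  have hratio : 0 < c * t / a := by positivity
  have hsplit : Real.log t = Real.log (a / c) + Real.log (c * t / a) := by
    rw [← Real.log_mul (by positivity) hratio.ne']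
    congr 1
    field_simp
  have hlog : Real.log (c * t / a) < c * t / a - 1 := by
    refine Real.log_lt_sub_one_of_pos hratio fun h => hne ?_
    field_simp at h ⊢
    linarith
  calc a * Real.log t - c * t
      = a * Real.log (a / c) + a * Real.log (c * t / a) - c * t := by rw [hsplit]; ring
    _ < a * Real.log (a / c) + a * (c * t / a - 1) - c * t := by gcongr
    _ = a * Real.log (a / c) - a := by field_simp; ring

/-- Add `mul_log_sub_mul_lt_of_ne` at `t` to its non-strict form at `1 - t`, with `c = a + b`:
the linear terms cancel since `1 - a / (a + b) = b / (a + b)`. -/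
lemma log_mul_add_log_one_sub_mul_lt_of_ne {a b t : ℝ} (ha : 0 ≤ a) (hb : 0 ≤ b)
    (hab : 0 < a + b) (ht : t ∈ Set.Ioo (0 : ℝ) 1) (hne : t ≠ a / (a + b)) :
    Real.log t * a + Real.log (1 - t) * b
      < Real.log (a / (a + b)) * a + Real.log (1 - a / (a + b)) * b := by
  have hcompl : 1 - a / (a + b) = b / (a + b) := by field_simp; ring
  have hlt := mul_log_sub_mul_lt_of_ne ha hab ht.1 hne
  have hle : b * Real.log (1 - t) - (a + b) * (1 - t) ≤ b * Real.log (b / (a + b)) - b := by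
    rcases eq_or_ne (1 - t) (b / (a + b)) with heq | hne'
    · rw [heq, mul_div_cancel₀ _ hab.ne']
    · exact (mul_log_sub_mul_lt_of_ne hb hab (by linarith [ht.2]) hne').le
  rw [hcompl]
  linarith

lemma log_mul_add_log_one_sub_mul_le {a b t : ℝ} (ha : 0 ≤ a) (hb : 0 ≤ b)
    (hab : 0 < a + b) (ht : t ∈ Set.Ioo (0 : ℝ) 1) :
    Real.log t * a + Real.log (1 - t) * b
      ≤ Real.log (a / (a + b)) * a + Real.log (1 - a / (a + b)) * b := by
  rcases eq_or_ne t (a / (a + b)) with rfl | hne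
  · rfl
  · exact (log_mul_add_log_one_sub_mul_lt_of_ne ha hb hab ht hne).le

theorem gan_optimal_discriminator_general {X : Type*} [MeasurableSpace X]
    (μ : Measure X)
    (p q : X → ℝ)
    (hp0 : ∀ᵐ x ∂μ, 0 ≤ p x) (hq0 : ∀ᵐ x ∂μ, 0 ≤ q x)
    (hpq : ∀ᵐ x ∂μ, 0 < p x + q x)
    (hoptint1 : Integrable (fun x => Real.log (p x / (p x + q x)) * p x) μ)
    (hoptint2 : Integrable (fun x => Real.log (1 - p x / (p x + q x)) * q x) μ) :
    ∀ T : X → ℝ, Measurable T → (∀ x, T x ∈ Set.Ioo (0:ℝ) 1) →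
      Integrable (fun x => Real.log (T x) * p x) μ →
      Integrable (fun x => Real.log (1 - T x) * q x) μ →
      ((∫ x, Real.log (T x) * p x ∂μ) + ∫ x, Real.log (1 - T x) * q x ∂μ
        ≤ (∫ x, Real.log (p x / (p x + q x)) * p x ∂μ)
          + ∫ x, Real.log (1 - p x / (p x + q x)) * q x ∂μ)
      ∧ (((∫ x, Real.log (T x) * p x ∂μ) + ∫ x, Real.log (1 - T x) * q x ∂μ
          = (∫ x, Real.log (p x / (p x + q x)) * p x ∂μ)
            + ∫ x, Real.log (1 - p x / (p x + q x)) * q x ∂μ) →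
        ∀ᵐ x ∂μ, T x = p x / (p x + q x)) := by
  intro T _ hT hTint1 hTint2
  have hTint := hTint1.add hTint2
  have hoptint := hoptint1.add hoptint2
  have hle : (fun x => Real.log (T x) * p x + Real.log (1 - T x) * q x)
      ≤ᵐ[μ] fun x => Real.log (p x / (p x + q x)) * p x
        + Real.log (1 - p x / (p x + q x)) * q x := by
    filter_upwards [hp0, hq0, hpq] with x hpx hqx hpqx
    exact log_mul_add_log_one_sub_mul_le hpx hqx hpqx (hT x)
  rw [← integral_add hTint1 hTint2, ← integral_add hoptint1 hoptint2]
  refine ⟨integral_mono_ae hTint hoptint hle, fun heq => ?_⟩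
  filter_upwards [hp0, hq0, hpq, (integral_eq_iff_of_ae_le hTint hoptint hle).1 heq]
    with x hpx hqx hpqx hx
  by_contra hne
  exact (log_mul_add_log_one_sub_mul_lt_of_ne hpx hqx hpqx (hT x) hne).ne hx

/-- Original GAN optimal discriminator: `T*(x) = p(x)/(p(x)+q(x))` uniquely
maximizes `E_p[log T] + E_q[log (1 − T)]` over measurable `T : X → (0,1)`. -/
theorem gan_optimal_discriminator {X : Type*} [MeasurableSpace X]
    (μ : Measure X) [SigmaFinite μ]
    (p q : X → ℝ)
    (hp : Measurable p) (hq : Measurable q)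
    (hp0 : ∀ᵐ x ∂μ, 0 ≤ p x) (hq0 : ∀ᵐ x ∂μ, 0 ≤ q x)
    (hpq : ∀ᵐ x ∂μ, 0 < p x + q x)
    (hpint : ∫ x, p x ∂μ = 1) (hqint : ∫ x, q x ∂μ = 1)
    (hoptint1 : Integrable (fun x => Real.log (p x / (p x + q x)) * p x) μ)
    (hoptint2 : Integrable (fun x => Real.log (1 - p x / (p x + q x)) * q x) μ) :
    ∀ T : X → ℝ, Measurable T → (∀ x, T x ∈ Set.Ioo (0:ℝ) 1) →
      Integrable (fun x => Real.log (T x) * p x) μ →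
      Integrable (fun x => Real.log (1 - T x) * q x) μ →
      ((∫ x, Real.log (T x) * p x ∂μ) + ∫ x, Real.log (1 - T x) * q x ∂μ
        ≤ (∫ x, Real.log (p x / (p x + q x)) * p x ∂μ)
          + ∫ x, Real.log (1 - p x / (p x + q x)) * q x ∂μ)
      ∧ (((∫ x, Real.log (T x) * p x ∂μ) + ∫ x, Real.log (1 - T x) * q x ∂μ
          = (∫ x, Real.log (p x / (p x + q x)) * p x ∂μ)
            + ∫ x, Real.log (1 - p x / (p x + q x)) * q x ∂μ) →
        ∀ᵐ x ∂μ, T x = p x / (p x + q x)) :=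
  gan_optimal_discriminator_general μ p q hp0 hq0 hpq hoptint1 hoptint2
end
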